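/- arXiv:1602.04336 — 2 statements merged into one kernel-verified Lean document; each statement's English description precedes it below -/
import Mathlib

section
/- Suppose {λ_k}_{k∈ℤ^d} ⊂ ℝ^d is such that there exist constants 0 < A ≤ B < ∞ with A‖f‖₂² ≤ Σ_{k∈ℤ^d} |f̂(λ_k)|² ≤ B‖f‖₂² for all f ∈ 𝒰_d. Let {μ_k}_{k∈ℤ^d} ⊂ ℝ^d and M > 0 be such that ‖λ_k − μ_k‖_∞ < M for all k ∈ ℤ^d. Then for every ρ > 0 and every f ∈ 𝒰_d, Σ_{k∈ℤ^d} |f̂(μ_k)|² ≤ B(1 + √B')² ‖f‖₂², where B' = (B/A)(e^{M²ρ²d} − 1)(e^{π²d/ρ²} − 1). -/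
open MeasureTheory Real Complex

noncomputable section

/-- The Fourier transform of `f : ℝ^d → ℂ`: `f̂(γ) = ∫ f(x) e^{-2πi x·γ} dx`. -/
def fourierT {d : ℕ} (f : EuclideanSpace ℝ (Fin d) → ℂ) (γ : EuclideanSpace ℝ (Fin d)) : ℂ :=
  ∫ x : EuclideanSpace ℝ (Fin d),
    f x * Complex.exp ((-(2 * Real.pi * (inner ℝ x γ : ℝ)) : ℝ) * Complex.I)

/-!
Write `e^{-2πi⟨x,μ⟩} = e^{-2πi⟨x,λ⟩} e^{-2πi⟨x,μ-λ⟩}`, expand the second factor in its Taylor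
series and each power `⟨x,δ⟩^m` into the `d^m` products `x_{a 1} ⋯ x_{a m}`. This writes
`f̂(μ_k) = Σ_{m,a} c_{m,a}(μ_k - λ_k) (x^a f)^(λ_k)` with `|c_{m,a}| ≤ (2πM)^m / m!`, while on the
cube `‖x^a f‖₂ ≤ 2^{-m} ‖f‖₂`. The Bessel bound for `{λ_k}` and Minkowski's inequality in `ℓ²`
give `‖(f̂(μ_k))_k‖_{ℓ²} ≤ √B e^{πMd} ‖f‖₂`. Finally `e^{πMd} - 1 = e^{ab} - 1` with
`a = Mρ√d`, `b = π√d/ρ`, and Cauchy–Schwarz applied to the exponential series gives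
`(e^{ab} - 1)² ≤ (e^{a²} - 1)(e^{b²} - 1)`.
-/

open Function SchwartzMap Nat

lemma hasSum_pow_succ_div_factorial (x : ℝ) :
    HasSum (fun n : ℕ => x ^ (n + 1) / (n + 1)!) (Real.exp x - 1) := by
  have h := (hasSum_nat_add_iff' 1).mpr (NormedSpace.expSeries_div_hasSum_exp x)
  rw [← Real.exp_eq_exp_ℝ] at h
  simpa using h

lemma hasSum_sigma_pow_div_factorial {d : ℕ} {c : ℝ} (hc : 0 ≤ c) :
    HasSum (fun j : Σ m : ℕ, Fin m → Fin d => c ^ j.1 / j.1 !) (Real.exp (c * d)) := by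
  have hfiber : ∀ m : ℕ, HasSum (fun _ : Fin m → Fin d => c ^ m / m !) ((c * d) ^ m / m !) :=
    fun m => by
      convert hasSum_fintype (fun _ : Fin m → Fin d => c ^ m / m !) using 1
      simp [mul_pow]
      ring
  have hexp : HasSum (fun m : ℕ => (c * d) ^ m / m !) (Real.exp (c * d)) := by
    rw [Real.exp_eq_exp_ℝ]
    exact NormedSpace.expSeries_div_hasSum_exp _
  refine hexp.sigma_of_hasSum hfiber ((summable_sigma_of_nonneg fun _ => by positivity).2
    ⟨fun m => (hfiber m).summable, ?_⟩)
  simpa only [(hfiber _).tsum_eq] using hexp.summable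

/-- Cauchy–Schwarz for `e^{ab} - 1 = Σ_{n ≥ 1} (a^n / √n!) (b^n / √n!)`. -/
theorem exp_mul_sub_one_sq_le {a b : ℝ} (ha : 0 ≤ a) (hb : 0 ≤ b) :
    (Real.exp (a * b) - 1) ^ 2 ≤ (Real.exp (a ^ 2) - 1) * (Real.exp (b ^ 2) - 1) := by
  set u : ℝ → ℕ → ℝ := fun c n => c ^ (n + 1) / √((n + 1)! : ℝ)
  have hfact : ∀ n : ℕ, (0 : ℝ) ≤ (n + 1)! := fun n => Nat.cast_nonneg _
  have hu_sq : ∀ c, HasSum (fun n => u c n ^ (2 : ℝ)) (√(Real.exp (c ^ 2) - 1) ^ (2 : ℝ)) := by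
    intro c
    simp_rw [Real.rpow_two, sq_sqrt (sub_nonneg.2 (one_le_exp (sq_nonneg c)))]
    convert hasSum_pow_succ_div_factorial (c ^ 2) using 2 with n
    rw [div_pow, sq_sqrt (hfact n), ← pow_mul, ← pow_mul, mul_comm]
  have hu_mul : HasSum (fun n => u a n * u b n) (Real.exp (a * b) - 1) := by
    convert hasSum_pow_succ_div_factorial (a * b) using 2 with n
    simp only [u]
    have hs0 : √((n + 1)! : ℝ) ≠ 0 := by positivity
    field_simp
    rw [sq_sqrt (hfact n)]
    ring
  obtain ⟨C, hC0, hC, hsum⟩ := Real.inner_le_Lp_mul_Lq_hasSum_of_nonneg .two_two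
    (sqrt_nonneg _) (sqrt_nonneg _) (fun n => by positivity) (fun n => by positivity)
    (hu_sq a) (hu_sq b)
  rw [hu_mul.unique hsum]
  calc C ^ 2 ≤ (√(Real.exp (a ^ 2) - 1) * √(Real.exp (b ^ 2) - 1)) ^ 2 := by gcongr
    _ = _ := by
      rw [mul_pow, sq_sqrt (sub_nonneg.2 (one_le_exp (sq_nonneg a))),
        sq_sqrt (sub_nonneg.2 (one_le_exp (sq_nonneg b)))]

lemma exp_pi_mul_sub_one_sq_le {M ρ : ℝ} (hM : 0 ≤ M) (hρ : 0 < ρ) (d : ℕ) :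
    (Real.exp (π * M * d) - 1) ^ 2 ≤
      (Real.exp (M ^ 2 * ρ ^ 2 * d) - 1) * (Real.exp (π ^ 2 * d / ρ ^ 2) - 1) := by
  have hd : √(d : ℝ) ^ 2 = d := sq_sqrt (Nat.cast_nonneg d)
  convert exp_mul_sub_one_sq_le (a := M * ρ * √d) (b := π * √d / ρ) (by positivity)
    (by positivity) using 4
  · field_simp
    rw [hd]
  · rw [mul_pow, mul_pow, hd]
  · rw [div_pow, mul_pow, hd]

section Minkowski

variable {𝕜 ι κ : Type*} [RCLike 𝕜]

lemma norm_le_of_tsum_sq_norm_le {z : κ → 𝕜} {s : ℝ} (hz : Summable fun k => ‖z k‖ ^ 2)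
    (hzs : ∑' k, ‖z k‖ ^ 2 ≤ s ^ 2) (hs : 0 ≤ s) (k : κ) : ‖z k‖ ≤ s :=
  (pow_le_pow_iff_left₀ (norm_nonneg (z k)) hs two_ne_zero).1
    ((hz.le_tsum k fun j _ => sq_nonneg ‖z j‖).trans hzs)

lemma summable_and_tsum_sq_norm_mul_le {c z : κ → 𝕜} {K : ℝ} (hc : ∀ k, ‖c k‖ ≤ K)
    (hz : Summable fun k => ‖z k‖ ^ 2) :
    (Summable fun k => ‖c k * z k‖ ^ 2) ∧ ∑' k, ‖c k * z k‖ ^ 2 ≤ K ^ 2 * ∑' k, ‖z k‖ ^ 2 := by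
  have hle : ∀ k, ‖c k * z k‖ ^ 2 ≤ K ^ 2 * ‖z k‖ ^ 2 := fun k => by
    rw [norm_mul, mul_pow]
    gcongr
    exact hc k
  have hsum := Summable.of_nonneg_of_le (fun k => sq_nonneg _) hle (hz.mul_left _)
  exact ⟨hsum, (hsum.tsum_le_tsum hle (hz.mul_left _)).trans_eq (tsum_mul_left)⟩

/-- Minkowski's inequality in `ℓ²(κ)` for a series of vectors `T j`. -/
theorem summable_and_tsum_sq_norm_tsum_le {T : ι → κ → 𝕜} {S : ι → ℝ}
    (hT : ∀ j, Summable fun k => ‖T j k‖ ^ 2) (hTS : ∀ j, ∑' k, ‖T j k‖ ^ 2 ≤ S j ^ 2)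
    (hS : Summable S) (hS0 : ∀ j, 0 ≤ S j) :
    (Summable fun k => ‖∑' j, T j k‖ ^ 2) ∧ ∑' k, ‖∑' j, T j k‖ ^ 2 ≤ (∑' j, S j) ^ 2 := by
  suffices key : ∀ F : Finset κ, ∑ k ∈ F, ‖∑' j, T j k‖ ^ 2 ≤ (∑' j, S j) ^ 2 by
    have hsum := summable_of_sum_le (fun k => sq_nonneg _) key
    exact ⟨hsum, hsum.tsum_le_of_sum_le key⟩
  intro F
  let V : ι → EuclideanSpace 𝕜 F := fun j => WithLp.toLp 2 fun k => T j k
  have hV : ∀ j, ‖V j‖ ≤ S j := fun j => by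
    refine (pow_le_pow_iff_left₀ (norm_nonneg _) (hS0 j) two_ne_zero).1 ?_
    rw [EuclideanSpace.norm_sq_eq]
    calc ∑ k : F, ‖T j k‖ ^ 2 = ∑ k ∈ F, ‖T j k‖ ^ 2 := Finset.sum_coe_sort F fun k => ‖T j k‖ ^ 2
      _ ≤ ∑' k, ‖T j k‖ ^ 2 := (hT j).sum_le_tsum F fun _ _ => sq_nonneg _
      _ ≤ S j ^ 2 := hTS j
  have hVsum : Summable fun j => ‖V j‖ := hS.of_nonneg_of_le (fun _ => norm_nonneg _) hV
  have hcoord : ∀ k : F, (∑' j, V j) k = ∑' j, T j k := fun k =>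
    (EuclideanSpace.proj (𝕜 := 𝕜) k).map_tsum hVsum.of_norm
  calc ∑ k ∈ F, ‖∑' j, T j k‖ ^ 2 = ‖∑' j, V j‖ ^ 2 := by
        rw [EuclideanSpace.norm_sq_eq, ← Finset.sum_coe_sort F]
        simp only [hcoord]
    _ ≤ (∑' j, S j) ^ 2 := by
        gcongr
        exact (norm_tsum_le_tsum_norm hVsum).trans (hVsum.tsum_le_tsum hV hS)

end Minkowski

theorem integral_mul_cexp_eq_tsum {α : Type*} [MeasurableSpace α] {μ : Measure α} {g w : α → ℂ}
    {C : ℝ} (hg : Integrable g μ) (hw : AEStronglyMeasurable w μ)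
    (hwC : ∀ x ∈ support g, ‖w x‖ ≤ C) :
    ∫ x, g x * Complex.exp (w x) ∂μ = ∑' m : ℕ, ∫ x, g x * (w x ^ m / m !) ∂μ := by
  have hbound : ∀ (m : ℕ) x, ‖g x * (w x ^ m / m !)‖ ≤ ‖g x‖ * (C ^ m / m !) := by
    intro m x
    by_cases hx : g x = 0
    · simp [hx]
    rw [norm_mul, norm_div, norm_pow, Complex.norm_natCast]
    gcongr
    exact hwC x hx
  have hint : ∀ m : ℕ, Integrable (fun x => g x * (w x ^ m / m !)) μ := fun m =>
    (hg.norm.mul_const _).mono' (hg.aestronglyMeasurable.mul (by fun_prop))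
      (ae_of_all _ (hbound m))
  have hsum : Summable fun m : ℕ => ∫ x, ‖g x * (w x ^ m / m !)‖ ∂μ := by
    refine ((Real.summable_pow_div_factorial C).mul_left (∫ x, ‖g x‖ ∂μ)).of_nonneg_of_le
      (fun m => integral_nonneg fun x => norm_nonneg _) fun m => ?_
    rw [← integral_mul_const]
    exact integral_mono (hint m).norm (hg.norm.mul_const _) (hbound m)
  rw [integral_tsum_of_summable_integral_norm hint hsum]
  congr 1 with x
  rw [tsum_mul_left, Complex.exp_eq_exp_ℂ, NormedSpace.exp_eq_tsum_div]

section Cube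

local notation:max "ℝ^" d:max => EuclideanSpace ℝ (Fin d)

variable {d : ℕ}

def cube (d : ℕ) : Set ℝ^d := {x | ∀ i, |x i| ≤ 1 / 2}

lemma cube_subset_closedBall : cube d ⊆ Metric.closedBall 0 √d := by
  intro x hx
  rw [mem_closedBall_zero_iff, EuclideanSpace.norm_eq]
  gcongr
  calc ∑ i, ‖x i‖ ^ 2 ≤ ∑ _i : Fin d, (1 : ℝ) := by
        gcongr with i
        rw [Real.norm_eq_abs]
        nlinarith [abs_nonneg (x i), hx i]
    _ = d := by simp

def coordMonomial {m : ℕ} (a : Fin m → Fin d) (x : ℝ^d) : ℂ := ∏ i, (x (a i) : ℂ)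

lemma norm_coordMonomial_le {m : ℕ} (a : Fin m → Fin d) {x : ℝ^d} {r : ℝ}
    (hx : ∀ i, |x i| ≤ r) : ‖coordMonomial a x‖ ≤ r ^ m := by
  rw [coordMonomial, norm_prod]
  calc ∏ i, ‖(x (a i) : ℂ)‖ ≤ ∏ _i : Fin m, r :=
        Finset.prod_le_prod (fun i _ => norm_nonneg _) fun i _ =>
          (Complex.norm_real (x (a i))).trans_le (hx (a i))
    _ = r ^ m := by simp

lemma hasTemperateGrowth_coordMonomial {m : ℕ} (a : Fin m → Fin d) :
    (coordMonomial a).HasTemperateGrowth := by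
  have hcoord : ∀ j : Fin d, (fun x : ℝ^d => (x j : ℂ)).HasTemperateGrowth := fun j =>
    (Complex.ofRealCLM.comp (EuclideanSpace.proj j)).hasTemperateGrowth
  have := Finset.prod_induction (s := Finset.univ) (fun i => fun x : ℝ^d => (x (a i) : ℂ))
    Function.HasTemperateGrowth (fun _ _ hf hg => hf.mul hg)
    (Function.HasTemperateGrowth.const 1) fun i _ => hcoord (a i)
  convert this using 1
  ext x
  simp [coordMonomial, Finset.prod_apply]

def monomialMul {m : ℕ} (a : Fin m → Fin d) : 𝓢(ℝ^d, ℂ) →L[ℂ] 𝓢(ℝ^d, ℂ) :=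
  smulLeftCLM ℂ (coordMonomial a)

lemma monomialMul_apply {m : ℕ} (a : Fin m → Fin d) (f : 𝓢(ℝ^d, ℂ)) (x : ℝ^d) :
    monomialMul a f x = coordMonomial a x * f x :=
  smulLeftCLM_apply_apply (hasTemperateGrowth_coordMonomial a) f x

lemma support_monomialMul_subset {m : ℕ} (a : Fin m → Fin d) (f : 𝓢(ℝ^d, ℂ)) :
    support (monomialMul a f) ⊆ support f := fun x hx =>
  right_ne_zero_of_mul (by rwa [mem_support, monomialMul_apply] at hx)

lemma integral_norm_monomialMul_sq_le {m : ℕ} (a : Fin m → Fin d) {f : 𝓢(ℝ^d, ℂ)}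
    (hf : support f ⊆ cube d) :
    ∫ x, ‖monomialMul a f x‖ ^ 2 ≤ (1 / 4) ^ m * ∫ x, ‖f x‖ ^ 2 := by
  rw [← integral_const_mul]
  refine integral_mono_of_nonneg (ae_of_all _ fun x => sq_nonneg _)
    (((f.memLp 2).integrable_norm_pow two_ne_zero).const_mul _) (ae_of_all _ fun x => ?_)
  dsimp only
  by_cases hx : f x = 0
  · simp [monomialMul_apply, hx]
  rw [monomialMul_apply, norm_mul, mul_pow, show (1 / 4 : ℝ) ^ m = ((1 / 2) ^ m) ^ 2 by
    rw [← pow_mul, mul_comm, pow_mul]; norm_num]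
  gcongr
  exact norm_coordMonomial_le a (hf hx)

def taylorCoeff {m : ℕ} (a : Fin m → Fin d) (δ : ℝ^d) : ℂ :=
  (-2 * π * I) ^ m / m ! * coordMonomial a δ

lemma norm_taylorCoeff_le {m : ℕ} (a : Fin m → Fin d) {δ : ℝ^d} {M : ℝ} (hδ : ∀ i, |δ i| ≤ M) :
    ‖taylorCoeff a δ‖ ≤ (2 * π * M) ^ m / m ! := by
  have h2π : ‖-2 * π * I‖ = 2 * π := by simp [abs_of_pos pi_pos]
  calc ‖taylorCoeff a δ‖ = (2 * π) ^ m / m ! * ‖coordMonomial a δ‖ := by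
        rw [taylorCoeff, norm_mul, norm_div, norm_pow, h2π, Complex.norm_natCast]
    _ ≤ (2 * π) ^ m / m ! * M ^ m := by
        gcongr
        exact norm_coordMonomial_le a hδ
    _ = (2 * π * M) ^ m / m ! := by ring

lemma pow_div_factorial_eq_sum_taylorCoeff (m : ℕ) (x δ : ℝ^d) :
    ((-(2 * π * inner ℝ x δ) : ℝ) * I) ^ m / m ! =
      ∑ a : Fin m → Fin d, taylorCoeff a δ * coordMonomial a x := by
  have hinner : ((-(2 * π * inner ℝ x δ) : ℝ) * I : ℂ) = -2 * π * I * ∑ j, (x j : ℂ) * δ j := by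
    have : inner ℝ x δ = ∑ j, x j * δ j := by
      simp only [PiLp.inner_apply, RCLike.inner_apply, conj_trivial, mul_comm]
    rw [this]
    push_cast
    ring
  rw [hinner, mul_pow, Fintype.sum_pow, Finset.mul_sum, Finset.sum_div]
  refine Finset.sum_congr rfl fun a _ => ?_
  rw [taylorCoeff, coordMonomial, coordMonomial, Finset.prod_mul_distrib]
  ring

lemma integrable_mul_fourierPhase (g : 𝓢(ℝ^d, ℂ)) (γ : ℝ^d) :
    Integrable fun x => g x * Complex.exp ((-(2 * π * inner ℝ x γ) : ℝ) * I) :=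
  g.integrable.mul_bdd (by fun_prop) (ae_of_all _ fun x => (Complex.norm_exp_ofReal_mul_I _).le)

theorem fourierT_eq_tsum_taylorCoeff (f : 𝓢(ℝ^d, ℂ)) {R : ℝ}
    (hR : support f ⊆ Metric.closedBall 0 R) (lam mu : ℝ^d) :
    fourierT f mu = ∑' m : ℕ, ∑ a : Fin m → Fin d,
      taylorCoeff a (mu - lam) * fourierT (monomialMul a f) lam := by
  set e : ℝ^d → ℂ := fun x => Complex.exp ((-(2 * π * inner ℝ x lam) : ℝ) * I)
  set w : ℝ^d → ℂ := fun x => (-(2 * π * inner ℝ x (mu - lam)) : ℝ) * I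
  have hphase : ∀ x, Complex.exp ((-(2 * π * inner ℝ x mu) : ℝ) * I) =
      e x * Complex.exp (w x) := fun x => by
    rw [← Complex.exp_add]
    congr 1
    simp only [w, inner_sub_right]
    push_cast
    ring
  have hw : ∀ x ∈ support fun x => f x * e x, ‖w x‖ ≤ 2 * π * (R * ‖mu - lam‖) := by
    intro x hx
    have hxR : ‖x‖ ≤ R := mem_closedBall_zero_iff.1 (hR (left_ne_zero_of_mul hx))
    simp only [w, norm_mul, Complex.norm_I, mul_one, Complex.norm_real, Real.norm_eq_abs, abs_neg,
      abs_mul, abs_of_pos pi_pos, abs_two]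
    gcongr
    exact (abs_real_inner_le_norm x _).trans (by gcongr)
  calc fourierT f mu = ∫ x, f x * e x * Complex.exp (w x) := by
        simp_rw [fourierT, hphase, mul_assoc]
    _ = ∑' m : ℕ, ∫ x, f x * e x * (w x ^ m / m !) :=
        integral_mul_cexp_eq_tsum (integrable_mul_fourierPhase f lam) (by fun_prop) hw
    _ = ∑' m : ℕ, ∑ a : Fin m → Fin d,
          ∫ x, taylorCoeff a (mu - lam) * (monomialMul a f x * e x) := by
        refine tsum_congr fun m => ?_
        rw [← integral_finsetSum _ fun a _ => (integrable_mul_fourierPhase _ lam).const_mul _]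
        congr 1 with x
        rw [pow_div_factorial_eq_sum_taylorCoeff, Finset.mul_sum]
        refine Finset.sum_congr rfl fun a _ => ?_
        rw [monomialMul_apply]
        ring
    _ = _ := by simp_rw [integral_const_mul]; rfl

def IsFourierBessel {ι : Type*} (lam : ι → ℝ^d) (B : ℝ) : Prop :=
  ∀ g : 𝓢(ℝ^d, ℂ), support g ⊆ cube d →
    (Summable fun k => ‖fourierT g (lam k)‖ ^ 2) ∧
      ∑' k, ‖fourierT g (lam k)‖ ^ 2 ≤ B * ∫ x, ‖g x‖ ^ 2

lemma isFourierBessel_of_frame {ι : Type*} {lam : ι → ℝ^d} {A B : ℝ} (hA : 0 < A)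
    (hframe : ∀ g : 𝓢(ℝ^d, ℂ), support g ⊆ cube d →
      A * ∫ x, ‖g x‖ ^ 2 ≤ ∑' k, ‖fourierT g (lam k)‖ ^ 2 ∧
        ∑' k, ‖fourierT g (lam k)‖ ^ 2 ≤ B * ∫ x, ‖g x‖ ^ 2) :
    IsFourierBessel lam B := by
  intro g hg
  refine ⟨?_, (hframe g hg).2⟩
  -- a divergent series has `tsum` zero, and then the lower bound forces `g = 0`
  by_contra hns
  have hlow := (hframe g hg).1
  rw [tsum_eq_zero_of_not_summable hns] at hlow
  have hint : Integrable fun x => ‖g x‖ ^ 2 := (g.memLp 2).integrable_norm_pow two_ne_zero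
  have hzero : ∫ x, ‖g x‖ ^ 2 = 0 :=
    le_antisymm (nonpos_of_mul_nonpos_right hlow hA) (integral_nonneg fun x => sq_nonneg _)
  have hae : ∀ᵐ x, g x = 0 :=
    ((integral_eq_zero_iff_of_nonneg (fun x => sq_nonneg _) hint).1 hzero).mono fun x hx => by
      simpa using hx
  have hfourier : ∀ γ, fourierT g γ = 0 := fun γ =>
    integral_eq_zero_of_ae (hae.mono fun x hx => by simp [hx])
  exact hns (by simp [hfourier])

theorem IsFourierBessel.perturb {ι : Type*} {lam mu : ι → ℝ^d} {B M : ℝ}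
    (hlam : IsFourierBessel lam B) (hB : 0 ≤ B) (hM : 0 ≤ M)
    (hclose : ∀ k i, |lam k i - mu k i| ≤ M) :
    IsFourierBessel mu (B * Real.exp (π * M * d) ^ 2) := by
  intro f hf
  have hBf : 0 ≤ B * ∫ x, ‖f x‖ ^ 2 := mul_nonneg hB (integral_nonneg fun x => sq_nonneg ‖f x‖)
  set N := √(B * ∫ x, ‖f x‖ ^ 2)
  let T : (Σ m : ℕ, Fin m → Fin d) → ι → ℂ := fun j k =>
    taylorCoeff j.2 (mu k - lam k) * fourierT (monomialMul j.2 f) (lam k)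
  let S : (Σ m : ℕ, Fin m → Fin d) → ℝ := fun j => (π * M) ^ j.1 / j.1 ! * N
  have hS0 : ∀ j, 0 ≤ S j := fun j => by positivity
  have hS : HasSum S (Real.exp (π * M * d) * N) :=
    (hasSum_sigma_pow_div_factorial (by positivity)).mul_right N
  have hT : ∀ j, (Summable fun k => ‖T j k‖ ^ 2) ∧ ∑' k, ‖T j k‖ ^ 2 ≤ S j ^ 2 := by
    rintro ⟨m, a⟩
    obtain ⟨hsum, hle⟩ := hlam _ ((support_monomialMul_subset a f).trans hf)
    have hcoeff : ∀ k, ‖taylorCoeff a (mu k - lam k)‖ ≤ (2 * π * M) ^ m / m ! := fun k =>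
      norm_taylorCoeff_le a fun i => by simpa [abs_sub_comm] using hclose k i
    refine (summable_and_tsum_sq_norm_mul_le hcoeff hsum).imp_right fun h => h.trans ?_
    calc ((2 * π * M) ^ m / m !) ^ 2 * ∑' k, ‖fourierT (monomialMul a f) (lam k)‖ ^ 2
        ≤ ((2 * π * M) ^ m / m !) ^ 2 * (B * ((1 / 4) ^ m * ∫ x, ‖f x‖ ^ 2)) := by
          gcongr
          exact hle.trans (by gcongr; exact integral_norm_monomialMul_sq_le a hf)
      _ = S ⟨m, a⟩ ^ 2 := by
          simp only [S, N, mul_pow, div_pow, sq_sqrt hBf]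
          rw [← pow_mul, mul_comm m 2, pow_mul]
          field_simp
          ring
  have hexpand : ∀ k, fourierT f (mu k) = ∑' j, T j k := by
    intro k
    have hTk : Summable fun j => T j k := hS.summable.of_norm_bounded fun j =>
      norm_le_of_tsum_sq_norm_le (hT j).1 (hT j).2 (hS0 j) k
    rw [hTk.tsum_sigma, fourierT_eq_tsum_taylorCoeff f (hf.trans cube_subset_closedBall)
      (lam k) (mu k)]
    simp_rw [tsum_fintype, T]
  obtain ⟨hsum, hle⟩ := summable_and_tsum_sq_norm_tsum_le (fun j => (hT j).1) (fun j => (hT j).2)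
    hS.summable hS0
  simp_rw [hexpand]
  refine ⟨hsum, hle.trans_eq ?_⟩
  rw [hS.tsum_eq, mul_pow, sq_sqrt hBf]
  ring

end Cube

/-- if `{λ_k}_{k∈ℤ^d}` satisfies the frame inequalities
`A‖f‖₂² ≤ Σ_k |f̂(λ_k)|² ≤ B‖f‖₂²` on `𝒰_d` and `‖λ_k − μ_k‖_∞ < M` for all `k`, then for
every `ρ > 0` and `f ∈ 𝒰_d`, `Σ_k |f̂(μ_k)|² ≤ B(1+√B')²‖f‖₂²`, where
`B' = (B/A)(e^{M²ρ²d} − 1)(e^{π²d/ρ²} − 1)`. -/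
theorem perturbed_fourier_frame_bessel {d : ℕ}
    (lam mu : (Fin d → ℤ) → EuclideanSpace ℝ (Fin d))
    (A B : ℝ) (hA : 0 < A) (hAB : A ≤ B)
    (hframe : ∀ f : SchwartzMap (EuclideanSpace ℝ (Fin d)) ℂ,
      Function.support ⇑f ⊆ {x : EuclideanSpace ℝ (Fin d) | ∀ i, |x i| ≤ 1 / 2} →
      A * ∫ x : EuclideanSpace ℝ (Fin d), ‖f x‖ ^ 2 ≤
          ∑' k : Fin d → ℤ, ‖fourierT (⇑f) (lam k)‖ ^ 2 ∧
        ∑' k : Fin d → ℤ, ‖fourierT (⇑f) (lam k)‖ ^ 2 ≤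
          B * ∫ x : EuclideanSpace ℝ (Fin d), ‖f x‖ ^ 2)
    (M : ℝ) (hM : 0 < M)
    (hclose : ∀ k : Fin d → ℤ, ∀ i : Fin d, |lam k i - mu k i| < M)
    (ρ : ℝ) (hρ : 0 < ρ)
    (f : SchwartzMap (EuclideanSpace ℝ (Fin d)) ℂ)
    (hf : Function.support ⇑f ⊆ {x : EuclideanSpace ℝ (Fin d) | ∀ i, |x i| ≤ 1 / 2}) :
    Summable (fun k : Fin d → ℤ => ‖fourierT (⇑f) (mu k)‖ ^ 2) ∧
    ∑' k : Fin d → ℤ, ‖fourierT (⇑f) (mu k)‖ ^ 2 ≤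
      B * (1 + Real.sqrt ((B / A) * (Real.exp (M ^ 2 * ρ ^ 2 * d) - 1) *
        (Real.exp (Real.pi ^ 2 * d / ρ ^ 2) - 1))) ^ 2 *
        ∫ x : EuclideanSpace ℝ (Fin d), ‖f x‖ ^ 2 := by
  have hB : 0 < B := hA.trans_le hAB
  obtain ⟨hsum, hle⟩ := (isFourierBessel_of_frame hA hframe).perturb hB.le hM.le
    (fun k i => (hclose k i).le) f hf
  refine ⟨hsum, hle.trans (mul_le_mul_of_nonneg_right ?_ (integral_nonneg fun x =>
    sq_nonneg ‖f x‖))⟩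
  have hX : 0 ≤ Real.exp (M ^ 2 * ρ ^ 2 * d) - 1 := sub_nonneg.2 (one_le_exp (by positivity))
  have hY : 0 ≤ Real.exp (π ^ 2 * d / ρ ^ 2) - 1 := sub_nonneg.2 (one_le_exp (by positivity))
  gcongr
  calc Real.exp (π * M * d) = 1 + (Real.exp (π * M * d) - 1) := by ring
    _ ≤ 1 + √((Real.exp (M ^ 2 * ρ ^ 2 * d) - 1) * (Real.exp (π ^ 2 * d / ρ ^ 2) - 1)) := by
        gcongr
        exact le_sqrt_of_sq_le (exp_pi_mul_sub_one_sq_le hM.le hρ d)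
    _ ≤ _ := by
        gcongr 1 + √?_
        rw [mul_assoc (B / A)]
        exact le_mul_of_one_le_left (mul_nonneg hX hY) ((one_le_div hA).2 hAB)
end
end

section
/- Let d ≥ 2, let Q ⊂ S^{d−1} be a finite set, and let ε > 0. Then there exists a Schwartz function f on ℝ^d with support contained in the ball B_ε(0) such that ‖f‖₂ = 1 and f̂(γu) = 0 for all γ ∈ ℝ and all u ∈ Q (equivalently, the Radon transform R_u(f) vanishes identically for every u ∈ Q). -/
/-
A bump function `g` supported in `B_ε(0)` is differentiated once in a direction `w_u ⟂ u` for
every `u ∈ Q`. Each derivative `∂_w` multiplies the Fourier transform by `2πi ⟨ξ, w⟩`, which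
vanishes on the line `ℝu` when `w ⟂ u`; such `w ≠ 0` exist because `d ≥ 2`. Differentiation does
not enlarge the support, and it does not kill `g`: a Schwartz function with `∂_w f = 0` is
constant along lines in direction `w` and tends to `0` at infinity, hence vanishes. Normalizing
in `L²` finishes the proof.
-/

open MeasureTheory Real Complex

noncomputable section

open scoped SchwartzMap InnerProductSpace
open FourierTransform LineDeriv Filter Topology Module

theorem exists_ne_zero_inner_eq_zero {𝕜 E : Type*} [RCLike 𝕜] [NormedAddCommGroup E]
    [InnerProductSpace 𝕜 E] [FiniteDimensional 𝕜 E] (h : 1 < finrank 𝕜 E) (u : E) :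
    ∃ w ≠ 0, ⟪u, w⟫_𝕜 = 0 := by
  have hne : (𝕜 ∙ u)ᗮ ≠ ⊥ := by
    intro hbot
    have := (𝕜 ∙ u).finrank_add_finrank_orthogonal
    rw [hbot, finrank_bot] at this
    have := finrank_span_le_card (R := 𝕜) ({u} : Set E)
    simp only [Set.toFinset_singleton, Finset.card_singleton] at this
    omega
  obtain ⟨w, hw, hw0⟩ := Submodule.exists_mem_ne_zero_of_ne_bot hne
  exact ⟨w, hw0, Submodule.inner_right_of_mem_orthogonal (Submodule.mem_span_singleton_self u) hw⟩

theorem SchwartzMap.exists_tsupport_subset_of_mem_nhds {E : Type*} [NormedAddCommGroup E]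
    [NormedSpace ℝ E] [FiniteDimensional ℝ E] {s : Set E} {x : E} (hs : s ∈ 𝓝 x) :
    ∃ g : 𝓢(E, ℂ), tsupport g ⊆ s ∧ g x = 1 := by
  obtain ⟨u, hu_supp, hu_cpt, hu_smooth, -, hux⟩ := exists_contDiff_tsupport_subset (n := ⊤) hs
  have hsupp : tsupport (ofRealCLM ∘ u) ⊆ s := (tsupport_comp_subset rfl u).trans hu_supp
  exact ⟨(hu_cpt.comp_left rfl).toSchwartzMap (ofRealCLM.contDiff.comp hu_smooth), hsupp,
    by simp [hux]⟩

section
variable {E F : Type*} [NormedAddCommGroup E] [NormedSpace ℝ E] [NormedAddCommGroup F]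
  [NormedSpace ℝ F]

theorem tendsto_const_add_smul_atTop_cobounded (x : E) {w : E} (hw : w ≠ 0) :
    Tendsto (fun t : ℝ => x + t • w) atTop (Bornology.cobounded E) := by
  refine (tendsto_const_add_cobounded x).comp (tendsto_norm_atTop_iff_cobounded.mp ?_)
  simp_rw [norm_smul]
  exact tendsto_norm_atTop_atTop.atTop_mul_const (norm_pos_iff.mpr hw)

theorem SchwartzMap.eq_zero_of_lineDerivOp_eq_zero [ProperSpace E] {w : E} (hw : w ≠ 0)
    {f : 𝓢(E, F)} (h : ∂_{w} f = 0) : f = 0 := by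
  ext x
  have hderiv (t : ℝ) : HasDerivAt (fun t : ℝ => f (x + t • w)) 0 t := by
    have := f.differentiableAt.hasFDerivAt.comp_hasDerivAt t
      (((hasDerivAt_id t).smul_const w).const_add x)
    simpa [← lineDerivOp_apply_eq_fderiv, h, Function.comp_def] using this
  have hconst (t : ℝ) : f (x + t • w) = f x := by
    simpa using is_const_of_deriv_eq_zero (fun t => (hderiv t).differentiableAt)
      (fun t => (hderiv t).deriv) t 0
  have hlim := f.tendsto_cocompact.comp
    (Metric.cobounded_eq_cocompact (α := E) ▸ tendsto_const_add_smul_atTop_cobounded x hw)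
  exact tendsto_nhds_unique (tendsto_const_nhds.congr fun t => (hconst t).symm) hlim

theorem SchwartzMap.iteratedLineDerivOp_ne_zero [ProperSpace E] {n : ℕ} {m : Fin n → E}
    (hm : ∀ i, m i ≠ 0) {f : 𝓢(E, F)} (hf : f ≠ 0) : ∂^{m} f ≠ 0 := by
  induction n with
  | zero => simpa using hf
  | succ n ih =>
    rw [iteratedLineDerivOp_succ_left]
    exact mt (eq_zero_of_lineDerivOp_eq_zero (hm 0)) (ih fun i => hm i.succ)

end

section
variable {V E : Type*} [NormedAddCommGroup V] [InnerProductSpace ℝ V] [FiniteDimensional ℝ V]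
  [MeasurableSpace V] [BorelSpace V] [NormedAddCommGroup E] [NormedSpace ℂ E]

theorem SchwartzMap.fourier_iteratedLineDerivOp_apply {n : ℕ} (m : Fin n → V) (f : 𝓢(V, E))
    (ξ : V) : 𝓕 (∂^{m} f) ξ = (∏ i, 2 * π * I * inner ℝ ξ (m i)) • 𝓕 f ξ := by
  induction n with
  | zero => simp
  | succ n ih =>
    have : (inner ℝ · (m 0)).HasTemperateGrowth := ((innerSL ℝ).flip (m 0)).hasTemperateGrowth
    rw [iteratedLineDerivOp_succ_left, fourier_lineDerivOp_eq, Fin.prod_univ_succ]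
    simp only [smul_apply, smulLeftCLM_apply_apply this, ih, Fin.tail]
    rw [← Complex.coe_smul, smul_smul, smul_smul, mul_assoc]

end

section
variable {E F : Type*} [NormedAddCommGroup E] [NormedSpace ℝ E] [NormedAddCommGroup F]
  [NormedSpace ℝ F] [MeasurableSpace E] [BorelSpace E] {μ : Measure E} [μ.HasTemperateGrowth]
  [μ.IsOpenPosMeasure] [SecondCountableTopologyEither E F]

theorem SchwartzMap.integral_norm_sq_pos {f : 𝓢(E, F)} (hf : f ≠ 0) :
    0 < ∫ x, ‖f x‖ ^ 2 ∂μ := by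
  have hint : Integrable (fun x => ‖f x‖ ^ 2) μ := (f.memLp 2 μ).integrable_norm_pow two_ne_zero
  rw [integral_pos_iff_support_of_nonneg (fun x => by positivity) hint]
  have hsupp : Function.support (fun x => ‖f x‖ ^ 2) = Function.support f := by
    ext x; simp
  obtain ⟨x, hx⟩ : ∃ x, f x ≠ 0 := by
    by_contra! h
    exact hf (SchwartzMap.ext h)
  rw [hsupp]
  exact (isOpen_ne_fun f.continuous continuous_const).measure_pos μ ⟨x, hx⟩

theorem SchwartzMap.exists_integral_norm_smul_sq_eq_one {f : 𝓢(E, F)} (hf : f ≠ 0) :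
    ∃ c : ℝ, ∫ x, ‖(c • f) x‖ ^ 2 ∂μ = 1 := by
  have hpos := f.integral_norm_sq_pos (μ := μ) hf
  refine ⟨(√(∫ x, ‖f x‖ ^ 2 ∂μ))⁻¹, ?_⟩
  simp only [smul_apply, norm_smul, mul_pow, norm_inv, Real.norm_eq_abs,
    abs_of_nonneg (sqrt_nonneg _)]
  rw [integral_const_mul, inv_pow, sq_sqrt hpos.le, inv_mul_cancel₀ hpos.ne']

end

theorem fourierT_eq_fourier {d : ℕ} (f : EuclideanSpace ℝ (Fin d) → ℂ) :
    fourierT f = 𝓕 f := by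
  ext ξ
  rw [fourierT, Real.fourier_eq']
  congr 1 with x
  rw [smul_eq_mul, mul_comm]
  push_cast
  ring_nf

theorem schwartz_vanishing_radon_directions_general {d : ℕ} (hd : 2 ≤ d)
    (Q : Set (EuclideanSpace ℝ (Fin d))) (hQfin : Q.Finite)
    (ε : ℝ) (hε : 0 < ε) :
    ∃ f : SchwartzMap (EuclideanSpace ℝ (Fin d)) ℂ,
      Function.support ⇑f ⊆ Metric.ball (0 : EuclideanSpace ℝ (Fin d)) ε ∧
      (∫ x : EuclideanSpace ℝ (Fin d), ‖f x‖ ^ 2) = 1 ∧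
      ∀ u ∈ Q, ∀ γ : ℝ, fourierT (⇑f) (γ • u) = 0 := by
  obtain ⟨g, hg_supp, hg0⟩ :=
    SchwartzMap.exists_tsupport_subset_of_mem_nhds
      (Metric.ball_mem_nhds (0 : EuclideanSpace ℝ (Fin d)) hε)
  choose W hW0 hW using exists_ne_zero_inner_eq_zero (𝕜 := ℝ)
    (by rw [finrank_euclideanSpace_fin]; omega : 1 < finrank ℝ (EuclideanSpace ℝ (Fin d)))
  obtain ⟨n, e, he⟩ := hQfin.fin_embedding
  set f₀ : SchwartzMap (EuclideanSpace ℝ (Fin d)) ℂ := ∂^{W ∘ e} g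
  have hf₀ : f₀ ≠ 0 :=
    SchwartzMap.iteratedLineDerivOp_ne_zero (fun _ => hW0 _) (by rintro rfl; simp at hg0)
  obtain ⟨c, hc⟩ := f₀.exists_integral_norm_smul_sq_eq_one (μ := volume) hf₀
  refine ⟨c • f₀, ?_, hc, ?_⟩
  · exact (Function.support_const_smul_subset c _).trans <| (subset_tsupport _).trans <|
      (SchwartzMap.tsupport_iteratedLineDerivOp_subset _ g).trans hg_supp
  · rintro u hu γ
    obtain ⟨i, rfl⟩ : u ∈ Set.range e := he ▸ hu
    rw [fourierT_eq_fourier, ← SchwartzMap.fourier_coe, fourier_smul, smul_apply,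
      SchwartzMap.fourier_iteratedLineDerivOp_apply, Finset.prod_eq_zero (Finset.mem_univ i)]
    · simp
    · simp [real_inner_smul_left, hW]

/-- for `d ≥ 2`, a finite `Q ⊂ S^{d−1}` and `ε > 0`, there is a Schwartz
function `f` supported in `B_ε(0)` with `‖f‖₂ = 1` whose Fourier transform vanishes on
every line `ℝu`, `u ∈ Q` (equivalently, `R_u(f) ≡ 0` for every `u ∈ Q`). -/
theorem schwartz_vanishing_radon_directions {d : ℕ} (hd : 2 ≤ d)
    (Q : Set (EuclideanSpace ℝ (Fin d))) (hQfin : Q.Finite)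
    (hQsphere : ∀ u ∈ Q, ‖u‖ = 1) (ε : ℝ) (hε : 0 < ε) :
    ∃ f : SchwartzMap (EuclideanSpace ℝ (Fin d)) ℂ,
      Function.support ⇑f ⊆ Metric.ball (0 : EuclideanSpace ℝ (Fin d)) ε ∧
      (∫ x : EuclideanSpace ℝ (Fin d), ‖f x‖ ^ 2) = 1 ∧
      ∀ u ∈ Q, ∀ γ : ℝ, fourierT (⇑f) (γ • u) = 0 :=
  schwartz_vanishing_radon_directions_general hd Q hQfin ε hε
end
end
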